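/- arXiv:1508.07624 — 7 statements merged into one kernel-verified Lean document; each statement's English description precedes it below -/
import Mathlib

section
/- Let p be a prime, N ≥ 1, and e_1,…,e_N integers. Then there exists a constant C_1 (depending only on N and the e_i) such that: for every tuple of integers u_1,…,u_N satisfying (i) the sum ∑_{i=1}^N e_i p^{u_i} is a nonzero integer, and (ii) no nonempty proper subset J ⊂ {1,…,N} satisfies ∑_{i∈J} e_i p^{u_i} = 0, we have u_i + C_1 ≥ 0 for every 1 ≤ i ≤ N. -/
/-!
Group the exponents by size. If `u i` is not the largest exponent, let `A` be the subsum over the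
indices `j` with `u j ≤ u i`; it is nonzero, and factoring out `p ^ (min u)` bounds its `p`-adic
valuation above by `u i + E`, where `E = ∑ |eⱼ|`. On the other hand `A` is the integer total sum
minus the terms with larger exponents, so its valuation is at least `min 0 (next larger exponent)`.
Hence each exponent is at least `-E` or lies within `E` of the next larger one, and descending
through the at most `N` distinct exponents gives `u i ≥ -N E`.
-/

open Finset

theorem neg_card_mul_le_of_forall_le_or_exists_gap {ι : Type*} [Fintype ι] (f : ι → ℤ) (E : ℕ)
    (h : ∀ i, -(E : ℤ) ≤ f i ∨ ∃ j, f i < f j ∧ f j ≤ f i + E) (i : ι) :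
    -((Fintype.card ι : ℤ) * E) ≤ f i := by
  classical
  have hdescent : ∀ n : ℕ, ∀ i, #{j | f i < f j} = n → -(((n : ℤ) + 1) * E) ≤ f i := by
    intro n
    induction n using Nat.strong_induction_on with
    | _ n ih =>
      intro i hi
      rcases h i with hle | ⟨j, hij, hji⟩
      · nlinarith
      · have hlt : #{k | f j < f k} < n := by
          rw [← hi]
          refine card_lt_card ⟨fun k hk => ?_, fun hsub => ?_⟩
          · simp only [mem_filter, mem_univ, true_and] at hk ⊢
            omega
          · simpa using hsub (mem_filter.2 ⟨mem_univ j, hij⟩)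
        have hj := ih _ hlt j rfl
        have : ((#{k | f j < f k} : ℤ) + 1) * E ≤ n * E :=
          mul_le_mul_of_nonneg_right (by exact_mod_cast hlt) (by positivity)
        linarith
  have hcard : #{j | f i < f j} < Fintype.card ι :=
    card_lt_card (filter_ssubset.2 ⟨i, mem_univ i, lt_irrefl _⟩)
  have := hdescent _ i rfl
  have : ((#{j | f i < f j} : ℤ) + 1) * E ≤ Fintype.card ι * E :=
    mul_le_mul_of_nonneg_right (by exact_mod_cast hcard) (by positivity)
  linarith

section Integrality

variable {ι : Type*} (s : Finset ι)

theorem sum_mul_zpow_eq_zpow_mul_sum {K : Type*} [Field K] {x : K} (hx : x ≠ 0) (c : ι → K)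
    (u : ι → ℤ) (m : ℤ) :
    ∑ i ∈ s, c i * x ^ u i = x ^ m * ∑ i ∈ s, c i * x ^ (u i - m) := by
  rw [mul_sum]
  refine sum_congr rfl fun i _ => ?_
  rw [mul_left_comm, ← zpow_add₀ hx, add_sub_cancel]

theorem exists_intCast_eq_sum_mul_zpow (e : ι → ℤ) (x : ℤ) {w : ι → ℤ}
    (hw : ∀ i ∈ s, 0 ≤ w i) : ∃ B : ℤ, (B : ℚ) = ∑ i ∈ s, (e i : ℚ) * (x : ℚ) ^ w i := by
  refine ⟨∑ i ∈ s, e i * x ^ (w i).toNat, ?_⟩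
  push_cast
  refine sum_congr rfl fun i hi => ?_
  rw [← zpow_natCast, Int.toNat_of_nonneg (hw i hi)]

end Integrality

section Valuation

variable (p : ℕ) [hp : Fact p.Prime]

theorem padicValRat_zpow_mul_intCast (m : ℤ) {B : ℤ} (hB : B ≠ 0) :
    padicValRat p ((p : ℚ) ^ m * B) = m + padicValInt p B := by
  rw [padicValRat.mul (zpow_ne_zero _ (by exact_mod_cast hp.out.ne_zero)) (by exact_mod_cast hB),
    padicValRat.zpow, padicValRat.self hp.out.one_lt, padicValRat.of_int, mul_one]

/-- Writing the sum as `p ^ m * B` with `m` the least exponent and `B` an integer,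
`p ^ v(B) ≤ |B| ≤ (∑ |eᵢ|) p ^ (t - m) < p ^ (∑ |eᵢ| + t - m)`. -/
theorem padicValRat_sum_mul_zpow_lt {ι : Type*} (s : Finset ι) (e u : ι → ℤ) {t : ℤ}
    (ht : ∀ i ∈ s, u i ≤ t) (h0 : ∑ i ∈ s, (e i : ℚ) * (p : ℚ) ^ u i ≠ 0) :
    padicValRat p (∑ i ∈ s, (e i : ℚ) * (p : ℚ) ^ u i) < t + ∑ i ∈ s, (e i).natAbs := by
  have hp0 : (p : ℚ) ≠ 0 := by exact_mod_cast hp.out.ne_zero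
  have hp1 : (1 : ℚ) < p := by exact_mod_cast hp.out.one_lt
  obtain ⟨j, -, hmin⟩ := s.exists_min_image u (nonempty_of_sum_ne_zero h0)
  obtain ⟨B, hB⟩ := exists_intCast_eq_sum_mul_zpow s e p fun i hi => sub_nonneg.2 (hmin i hi)
  push_cast at hB
  have hfac : ∑ i ∈ s, (e i : ℚ) * (p : ℚ) ^ u i = (p : ℚ) ^ u j * B := by
    rw [sum_mul_zpow_eq_zpow_mul_sum s hp0 _ u (u j), hB]
  have hB0 : B ≠ 0 := by
    rintro rfl
    exact h0 (by simp [hfac])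
  set E := ∑ i ∈ s, (e i).natAbs
  have hBlt : |(B : ℚ)| < (p : ℚ) ^ (t - u j + E) :=
    calc |(B : ℚ)| ≤ ∑ i ∈ s, ((e i).natAbs : ℚ) * (p : ℚ) ^ (u i - u j) := by
          rw [hB]
          refine (abs_sum_le_sum_abs _ _).trans (sum_le_sum fun i _ => ?_)
          rw [abs_mul, abs_of_pos (zpow_pos (by positivity : (0 : ℚ) < p) _), Nat.cast_natAbs, Int.cast_abs]
      _ ≤ ∑ i ∈ s, ((e i).natAbs : ℚ) * (p : ℚ) ^ (t - u j) := by
          refine sum_le_sum fun i hi => ?_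
          gcongr
          · exact hp1.le
          · linarith [ht i hi]
      _ = E * (p : ℚ) ^ (t - u j) := by simp only [E, Nat.cast_sum, sum_mul]
      _ < (p : ℚ) ^ (E : ℤ) * (p : ℚ) ^ (t - u j) := by
          gcongr
          rw [zpow_natCast]
          exact_mod_cast Nat.lt_pow_self hp.out.one_lt
      _ = (p : ℚ) ^ (t - u j + E) := by rw [← zpow_add₀ hp0, add_comm]
  have hdvd : (p : ℚ) ^ (padicValInt p B : ℤ) ≤ |(B : ℚ)| := by
    rw [zpow_natCast, ← Int.cast_abs]
    exact_mod_cast Int.le_of_dvd (abs_pos.2 hB0) ((dvd_abs _ _).2 (padicValInt_dvd B))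
  have hv := (zpow_lt_zpow_iff_right₀ hp1).1 (hdvd.trans_lt hBlt)
  rw [hfac, padicValRat_zpow_mul_intCast p _ hB0]
  omega

theorem le_padicValRat_sum_mul_zpow {ι : Type*} (s : Finset ι) (e u : ι → ℤ) {M : ℤ}
    (hM : M ≤ 0) (hu : ∀ i ∈ s, M ≤ u i) :
    M ≤ padicValRat p (∑ i ∈ s, (e i : ℚ) * (p : ℚ) ^ u i) := by
  have hp0 : (p : ℚ) ≠ 0 := by exact_mod_cast hp.out.ne_zero
  obtain ⟨B, hB⟩ := exists_intCast_eq_sum_mul_zpow s e p fun i hi => sub_nonneg.2 (hu i hi)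
  push_cast at hB
  rw [sum_mul_zpow_eq_zpow_mul_sum s hp0 _ u M, ← hB]
  rcases eq_or_ne B 0 with rfl | hB0
  · simpa using hM
  · rw [padicValRat_zpow_mul_intCast p _ hB0]
    omega

theorem neg_le_or_exists_lt_le_add {ι : Type*} [Fintype ι] (e u : ι → ℤ) {z : ℤ} (hz : z ≠ 0)
    (hsum : ∑ i, (e i : ℚ) * (p : ℚ) ^ u i = z)
    (hsub : ∀ J : Finset ι, J.Nonempty → J ≠ univ → ∑ i ∈ J, (e i : ℚ) * (p : ℚ) ^ u i ≠ 0)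
    (i : ι) :
    -((∑ j, (e j).natAbs : ℕ) : ℤ) ≤ u i ∨
      ∃ j, u i < u j ∧ u j ≤ u i + ((∑ j, (e j).natAbs : ℕ) : ℤ) := by
  set E := ∑ j, (e j).natAbs
  by_contra! hgap
  obtain ⟨hlow, hgap⟩ := hgap
  set term := fun j => (e j : ℚ) * (p : ℚ) ^ u j
  set A := ∑ j ∈ univ with u j ≤ u i, term j
  set R := ∑ j ∈ univ with ¬u j ≤ u i, term j
  have hAR : A + R = z := by rw [sum_filter_add_sum_filter_not, hsum]
  have hA0 : A ≠ 0 := by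
    by_cases hall : ({j | u j ≤ u i} : Finset ι) = univ
    · simpa [A, hall, hsum] using hz
    · exact hsub _ ⟨i, by simp⟩ hall
  have hupper : padicValRat p A < u i + E := by
    refine (padicValRat_sum_mul_zpow_lt p _ e u (fun j hj => (mem_filter.1 hj).2) hA0).trans_le ?_
    have : ((∑ j ∈ univ with u j ≤ u i, (e j).natAbs : ℕ) : ℤ) ≤ E := by
      exact_mod_cast sum_le_sum_of_subset (filter_subset (u · ≤ u i) univ)
    omega
  have hR : u i + E ≤ padicValRat p R :=
    le_padicValRat_sum_mul_zpow p _ e u (by omega) fun j hj =>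
      (hgap j (not_le.1 (mem_filter.1 hj).2)).le
  have hz' : u i + E ≤ padicValRat p z := by
    rw [padicValRat.of_int]
    omega
  have hAz : (z : ℚ) + -R = A := by rw [← hAR]; ring
  have hmin := padicValRat.min_le_padicValRat_add (p := p) (q := z) (r := -R) (hAz ▸ hA0)
  rw [hAz, padicValRat.neg] at hmin
  omega

end Valuation

theorem stmt_0_general (p : ℕ) (hp : p.Prime) (N : ℕ) (e : Fin N → ℤ) :
    ∃ C₁ : ℤ, ∀ u : Fin N → ℤ,
      (∃ z : ℤ, z ≠ 0 ∧ (∑ i, (e i : ℚ) * (p : ℚ) ^ (u i)) = (z : ℚ)) →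
      (∀ J : Finset (Fin N), J.Nonempty → J ≠ Finset.univ →
        (∑ i ∈ J, (e i : ℚ) * (p : ℚ) ^ (u i)) ≠ 0) →
      ∀ i, u i + C₁ ≥ 0 := by
  have : Fact p.Prime := ⟨hp⟩
  refine ⟨N * (∑ j, (e j).natAbs : ℕ), fun u ⟨z, hz, hsum⟩ hsub i => ?_⟩
  have := neg_card_mul_le_of_forall_le_or_exists_gap u _
    (neg_le_or_exists_lt_le_add p e u hz hsum hsub) i
  rw [Fintype.card_fin] at this
  omega

/-- Lemma on exponential sums: there is a constant `C₁` such that any tuple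
`u : Fin N → ℤ` with `∑ eᵢ p^{uᵢ}` a nonzero integer and no vanishing nonempty
proper subsum satisfies `uᵢ + C₁ ≥ 0` for all `i`. -/
theorem stmt_0 (p : ℕ) (hp : p.Prime) (N : ℕ) (hN : 1 ≤ N) (e : Fin N → ℤ) :
    ∃ C₁ : ℤ, ∀ u : Fin N → ℤ,
      (∃ z : ℤ, z ≠ 0 ∧ (∑ i, (e i : ℚ) * (p : ℚ) ^ (u i)) = (z : ℚ)) →
      (∀ J : Finset (Fin N), J.Nonempty → J ≠ Finset.univ →
        (∑ i ∈ J, (e i : ℚ) * (p : ℚ) ^ (u i)) ≠ 0) →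
      ∀ i, u i + C₁ ≥ 0 :=
  stmt_0_general p hp N e
end

section
/- Let p be a prime and let A, B be distinct nonzero integers, neither divisible by p. Then there exists a finite set 𝒟 ⊂ ℤ such that every solution (x_1,x_2,x_3,x_4) ∈ ℕ_0^4 of the equation A·p^{x_1} − A·p^{x_2} + B·p^{x_3} − B·p^{x_4} = 0 satisfies (x_3 − x_4) − (x_1 − x_2) ∈ 𝒟. -/
/-!
Write `p ^ s - p ^ t = ε p ^ m (p ^ a - 1)` with `ε = ±1` and `s - t = ε a`. The equation
becomes `C p ^ m (p ^ a - 1) = D p ^ n (p ^ b - 1)` with `C = ±A`, `D = ±B` prime to `p`, and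
since `p ∤ p ^ a - 1` for `a > 0`, comparing `p`-adic valuations leaves
`C (p ^ a - 1) = D (p ^ b - 1)`. Comparing sizes bounds `|a - b|` by `max (|C|, |D|)`, and if
`C ≠ D` then `p ^ min (a, b)` divides `C - D = C p ^ a - D p ^ b ≠ 0`, which bounds `min (a, b)`.
If `C = D`, then `a = b`, and `A ≠ B` forces the two signs to agree, so the difference is `0`.
-/

lemma not_dvd_pow_sub_one {R : Type*} [CommRing R] {q : R} (hq : Prime q) {a : ℕ} (ha : a ≠ 0) :
    ¬ q ∣ q ^ a - 1 := fun h =>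
  hq.not_isUnit (isUnit_of_dvd_one ((dvd_sub_right (dvd_pow_self q ha)).mp h))

lemma eq_of_pow_mul_eq_pow_mul {R : Type*} [CommMonoidWithZero R] [IsCancelMulZero R]
    {q u v : R} (hq : Prime q) (hu : ¬ q ∣ u) (hv : ¬ q ∣ v) {m n : ℕ}
    (h : q ^ m * u = q ^ n * v) : u = v := by
  wlog hmn : m ≤ n generalizing m n u v
  · exact (this hv hu h.symm (le_of_not_ge hmn)).symm
  obtain ⟨k, rfl⟩ := Nat.exists_eq_add_of_le hmn
  rw [pow_add, mul_assoc] at h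
  have hu' : u = q ^ k * v := mul_left_cancel₀ (pow_ne_zero _ hq.ne_zero) h
  rcases k with _ | k
  · simpa using hu'
  · exact absurd (hu' ▸ dvd_mul_of_dvd_left (dvd_pow_self q k.succ_ne_zero) v) hu

lemma mul_pow_sub_one_eq_of_mul_pow_mul_pow_sub_one_eq {p C D : ℤ} (hp : Prime p)
    (hC : ¬ p ∣ C) (hD : ¬ p ∣ D) {m n a b : ℕ}
    (h : C * p ^ m * (p ^ a - 1) = D * p ^ n * (p ^ b - 1)) :
    C * (p ^ a - 1) = D * (p ^ b - 1) := by
  have hC0 : C ≠ 0 := fun h0 => hC (h0 ▸ dvd_zero p)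
  have hD0 : D ≠ 0 := fun h0 => hD (h0 ▸ dvd_zero p)
  rcases eq_or_ne a 0 with rfl | ha
  · have hb : p ^ b - 1 = 0 := by simpa [hD0, hp.ne_zero] using h.symm
    simp [hb]
  rcases eq_or_ne b 0 with rfl | hb
  · have ha' : p ^ a - 1 = 0 := by simpa [hC0, hp.ne_zero] using h
    simp [ha']
  have hCa : ¬ p ∣ C * (p ^ a - 1) := fun hd =>
    (hp.dvd_or_dvd hd).elim hC (not_dvd_pow_sub_one hp ha)
  have hDb : ¬ p ∣ D * (p ^ b - 1) := fun hd =>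
    (hp.dvd_or_dvd hd).elim hD (not_dvd_pow_sub_one hp hb)
  exact eq_of_pow_mul_eq_pow_mul hp hCa hDb (m := m) (n := n) (by linear_combination h)

section PowSubOne

variable {q : ℕ} {C D : ℤ} {a b : ℕ}

lemma lt_add_natAbs_of_mul_pow_sub_one_eq (hq : 1 < q)
    (h : C * ((q : ℤ) ^ a - 1) = D * ((q : ℤ) ^ b - 1)) (hC : C ≠ 0) (hD : D ≠ 0) :
    b < a + C.natAbs := by
  have hq1 : (1 : ℤ) < q := by exact_mod_cast hq
  have hqa : (1 : ℤ) ≤ (q : ℤ) ^ a := one_le_pow₀ hq1.le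
  have hqb : (1 : ℤ) ≤ (q : ℤ) ^ b := one_le_pow₀ hq1.le
  have habs : |C| * ((q : ℤ) ^ a - 1) = |D| * ((q : ℤ) ^ b - 1) := by
    simpa [abs_mul, abs_of_nonneg, hqa, hqb] using congrArg abs h
  have hCq : |C| < (q : ℤ) ^ C.natAbs := by
    rw [← Int.natCast_natAbs]; exact_mod_cast Nat.lt_pow_self hq
  have : (q : ℤ) ^ b < (q : ℤ) ^ (a + C.natAbs) := by
    rw [pow_add]
    nlinarith [Int.one_le_abs hC, Int.one_le_abs hD]
  exact (pow_lt_pow_iff_right₀ hq1).mp this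

lemma min_lt_natAbs_sub_of_mul_pow_sub_one_eq (hq : 1 < q)
    (h : C * ((q : ℤ) ^ a - 1) = D * ((q : ℤ) ^ b - 1)) (hCD : C ≠ D) :
    min a b < (C - D).natAbs := by
  have hdvd : ((q ^ min a b : ℕ) : ℤ) ∣ C - D := by
    rw [show C - D = C * (q : ℤ) ^ a - D * (q : ℤ) ^ b by linear_combination -h]
    push_cast
    exact dvd_sub (dvd_mul_of_dvd_right (pow_dvd_pow _ (min_le_left a b)) C)
      (dvd_mul_of_dvd_right (pow_dvd_pow _ (min_le_right a b)) D)
  calc min a b < q ^ min a b := Nat.lt_pow_self hq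
    _ ≤ (C - D).natAbs :=
      Nat.le_of_dvd (Int.natAbs_pos.mpr (sub_ne_zero.mpr hCD)) (Int.ofNat_dvd_left.mp hdvd)

lemma eq_and_eq_or_lt_of_mul_pow_sub_one_eq (hq : 1 < q)
    (h : C * ((q : ℤ) ^ a - 1) = D * ((q : ℤ) ^ b - 1)) (hC : C ≠ 0) (hD : D ≠ 0) :
    (C = D ∧ a = b) ∨ (a < 2 * (C.natAbs + D.natAbs) ∧ b < 2 * (C.natAbs + D.natAbs)) := by
  by_cases hCD : C = D
  · subst hCD
    have hpow : (q : ℤ) ^ a = (q : ℤ) ^ b := by linarith [mul_left_cancel₀ hC h]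
    exact .inl ⟨rfl, Nat.pow_right_injective hq (by exact_mod_cast hpow)⟩
  · have hba := lt_add_natAbs_of_mul_pow_sub_one_eq hq h hC hD
    have hab := lt_add_natAbs_of_mul_pow_sub_one_eq hq h.symm hD hC
    have hmin := min_lt_natAbs_sub_of_mul_pow_sub_one_eq hq h hCD
    have := Int.natAbs_sub_le C D
    omega

end PowSubOne

lemma eq_and_eq_or_lt_of_mul_pow_mul_pow_sub_one_eq {p : ℕ} (hp : p.Prime) {C D : ℤ}
    (hC : ¬ (p : ℤ) ∣ C) (hD : ¬ (p : ℤ) ∣ D) {m n a b : ℕ}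
    (h : C * (p : ℤ) ^ m * ((p : ℤ) ^ a - 1) = D * (p : ℤ) ^ n * ((p : ℤ) ^ b - 1)) :
    (C = D ∧ a = b) ∨ (a < 2 * (C.natAbs + D.natAbs) ∧ b < 2 * (C.natAbs + D.natAbs)) :=
  eq_and_eq_or_lt_of_mul_pow_sub_one_eq hp.one_lt
    (mul_pow_sub_one_eq_of_mul_pow_mul_pow_sub_one_eq (Nat.prime_iff_prime_int.mp hp) hC hD h)
    (fun h0 => hC (h0 ▸ dvd_zero _)) (fun h0 => hD (h0 ▸ dvd_zero _))

lemma exists_pow_sub_pow_eq (q : ℤ) (s t : ℕ) :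
    ∃ ε : ℤ, IsUnit ε ∧ ∃ m a : ℕ,
      q ^ s - q ^ t = ε * q ^ m * (q ^ a - 1) ∧ (s : ℤ) - t = ε * a := by
  rcases le_total t s with h | h <;> obtain ⟨a, rfl⟩ := Nat.exists_eq_add_of_le h
  · exact ⟨1, isUnit_one, t, a, by ring, by push_cast; ring⟩
  · exact ⟨-1, isUnit_one.neg, s, a, by ring, by push_cast; ring⟩

theorem stmt_1_general (p : ℕ) (hp : p.Prime) (A B : ℤ)
    (hAB : A ≠ B) (hpA : ¬ (p : ℤ) ∣ A) (hpB : ¬ (p : ℤ) ∣ B) :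
    ∃ 𝒟 : Finset ℤ, ∀ x₁ x₂ x₃ x₄ : ℕ,
      A * (p : ℤ) ^ x₁ - A * (p : ℤ) ^ x₂ + B * (p : ℤ) ^ x₃ - B * (p : ℤ) ^ x₄ = 0 →
      ((x₃ : ℤ) - (x₄ : ℤ)) - ((x₁ : ℤ) - (x₂ : ℤ)) ∈ 𝒟 := by
  refine ⟨Finset.Icc (-(4 * (A.natAbs + B.natAbs) : ℤ)) (4 * (A.natAbs + B.natAbs)),
    fun x₁ x₂ x₃ x₄ h => ?_⟩
  obtain ⟨ε, hε, m, a, h₁₂, ha⟩ := exists_pow_sub_pow_eq p x₁ x₂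
  obtain ⟨δ, hδ, n, b, h₃₄, hb⟩ := exists_pow_sub_pow_eq p x₃ x₄
  have hεA : ¬ (p : ℤ) ∣ ε * A := by rwa [hε.dvd_mul_left]
  have hδB : ¬ (p : ℤ) ∣ -δ * B := by rwa [hδ.neg.dvd_mul_left]
  have key :
      ε * A * (p : ℤ) ^ m * ((p : ℤ) ^ a - 1) = -δ * B * (p : ℤ) ^ n * ((p : ℤ) ^ b - 1) := by
    linear_combination h - A * h₁₂ - B * h₃₄
  rw [Finset.mem_Icc, ha, hb]
  rcases eq_and_eq_or_lt_of_mul_pow_mul_pow_sub_one_eq hp hεA hδB key with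
    ⟨hεδ, rfl⟩ | ⟨ha', hb'⟩
  · have : ε = δ := by
      rcases Int.isUnit_iff.mp hε with rfl | rfl <;>
        rcases Int.isUnit_iff.mp hδ with rfl | rfl <;> omega
    subst this
    rw [sub_self]
    omega
  · simp only [Int.natAbs_mul, Int.natAbs_neg, Int.isUnit_iff_natAbs_eq.mp hε,
      Int.isUnit_iff_natAbs_eq.mp hδ, one_mul] at ha' hb'
    rcases Int.isUnit_iff.mp hε with rfl | rfl <;>
      rcases Int.isUnit_iff.mp hδ with rfl | rfl <;> omega

/-- There is a finite set `𝒟 ⊆ ℤ` such that every solution in nonnegative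
integers of `A p^{x₁} - A p^{x₂} + B p^{x₃} - B p^{x₄} = 0` satisfies
`(x₃ - x₄) - (x₁ - x₂) ∈ 𝒟`. -/
theorem stmt_1 (p : ℕ) (hp : p.Prime) (A B : ℤ) (hA : A ≠ 0) (hB : B ≠ 0)
    (hAB : A ≠ B) (hpA : ¬ (p : ℤ) ∣ A) (hpB : ¬ (p : ℤ) ∣ B) :
    ∃ 𝒟 : Finset ℤ, ∀ x₁ x₂ x₃ x₄ : ℕ,
      A * (p : ℤ) ^ x₁ - A * (p : ℤ) ^ x₂ + B * (p : ℤ) ^ x₃ - B * (p : ℤ) ^ x₄ = 0 →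
      ((x₃ : ℤ) - (x₄ : ℤ)) - ((x₁ : ℤ) - (x₂ : ℤ)) ∈ 𝒟 :=
  stmt_1_general p hp A B hAB hpA hpB
end

section
/- Let q > 1 be a fixed power of a prime p and let Z be a nonempty subset of ℕ^k. Suppose Z is contained in a finite union of Frobenius subsets of ℕ^k (a Frobenius subset being a set of the form {p^n·x : n ∈ ℕ_0} for some x ∈ ℕ^k), and suppose q·Z ⊆ Z. Then Z is a finite union of Frobenius subsets of base q, i.e., sets of the form {q^n·x : n ∈ ℕ_0}. -/
/-- If a nonempty set `Z ⊆ ℕ^k` (of vectors with positive coordinates) is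
contained in a finite union of Frobenius subsets `{p^n • x : n ∈ ℕ₀}` and
`q • Z ⊆ Z` for a fixed power `q > 1` of `p`, then `Z` is a finite union of
Frobenius subsets of base `q`. -/
theorem stmt_7 (p a k q : ℕ) (hp : p.Prime) (hq : q = p ^ a) (hq1 : 1 < q)
    (Z : Set (Fin k → ℕ)) (hZne : Z.Nonempty)
    (hpos : ∀ z ∈ Z, ∀ i, 0 < z i)
    (hcover : ∃ F : Finset (Fin k → ℕ),
      ∀ z ∈ Z, ∃ x ∈ F, ∃ n : ℕ, z = p ^ n • x)
    (hqZ : ∀ z ∈ Z, q • z ∈ Z) :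
    ∃ F' : Finset (Fin k → ℕ),
      Z = {z | ∃ x ∈ F', ∃ n : ℕ, z = q ^ n • x} := by
  classical
  obtain ⟨F, hF⟩ := hcover
  have ha : 0 < a := by
    rcases Nat.eq_zero_or_pos a with h | h
    · subst h; simp at hq; omega
    · exact h
  have hclos : ∀ n, ∀ z ∈ Z, q ^ n • z ∈ Z := by
    intro n
    induction n with
    | zero => intro z hz; simpa using hz
    | succ n ih =>
      intro z hz
      have h : q ^ (n + 1) • z = q ^ n • (q • z) := by
        rw [pow_succ, mul_smul]
      rw [h]
      exact ih _ (hqZ z hz)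
  rcases Nat.eq_zero_or_pos k with hk | hk
  · subst hk
    obtain ⟨z0, hz0⟩ := hZne
    refine ⟨{z0}, ?_⟩
    ext z
    have hzz : ∀ w w' : Fin 0 → ℕ, w = w' := fun w w' => funext fun i => i.elim0
    simp only [Set.mem_setOf_eq, Finset.mem_singleton]
    constructor
    · intro _; exact ⟨z0, rfl, 0, hzz _ _⟩
    · rintro ⟨x, hx, n, rfl⟩
      have h := hzz (q ^ n • x) z0
      rw [h]; exact hz0
  · set i0 : Fin k := ⟨0, hk⟩ with hi0
    set G : Set (Fin k → ℕ) := {z | z ∈ Z ∧ ¬ ∃ w ∈ Z, z = q • w} with hGdef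
    have key : ∀ z ∈ Z, ∀ z' ∈ G, ∀ (x : Fin k → ℕ) (n n' : ℕ), z = p ^ n • x →
        z' = p ^ n' • x → n ≤ n' → n % a = n' % a → z = z' := by
      intro z hz z' hz' x n n' hzn hzn' hle hmod
      have hdvd : a ∣ n' - n := (Nat.modEq_iff_dvd' hle).mp hmod
      obtain ⟨m, hm⟩ := hdvd
      have hz'' : z' = q ^ m • z := by
        rw [hzn', hzn, ← mul_smul, hq, ← pow_mul, ← pow_add]
        have : n' = a * m + n := by omega
        rw [this]
      cases m with
      | zero => rw [hz'']; simp
      | succ m' =>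
        exfalso
        apply hz'.2
        refine ⟨q ^ m' • z, hclos m' z hz, ?_⟩
        rw [hz'', ← mul_smul, pow_succ']
    choose xf hxf nf hnf using hF
    have hGfin : G.Finite := by
      rw [← Set.finite_coe_iff]
      have hinj : Function.Injective
          (fun zg : G => ((⟨xf zg.1 zg.2.1, hxf zg.1 zg.2.1⟩ : {y // y ∈ F}),
            (⟨nf zg.1 zg.2.1 % a, Nat.mod_lt _ ha⟩ : Fin a))) := by
        rintro ⟨z1, h1⟩ ⟨z2, h2⟩ heq
        simp only [Prod.mk.injEq, Subtype.mk.injEq, Fin.mk.injEq] at heq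
        obtain ⟨hx12, hn12⟩ := heq
        have e1 := hnf z1 h1.1
        have e2 := hnf z2 h2.1
        rw [hx12] at e1
        rcases le_total (nf z1 h1.1) (nf z2 h2.1) with hle | hle
        · exact Subtype.ext (key z1 h1.1 z2 h2 _ _ _ e1 e2 hle hn12)
        · exact Subtype.ext (key z2 h2.1 z1 h1 _ _ _ e2 e1 hle hn12.symm).symm
      exact Finite.of_injective _ hinj
    have descend : ∀ N, ∀ z ∈ Z, z i0 ≤ N → ∃ x ∈ G, ∃ n : ℕ, z = q ^ n • x := by
      intro N
      induction N with
      | zero => intro z hz h0; exact absurd (hpos z hz i0) (by omega)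
      | succ N ih =>
        intro z hz hle
        by_cases hg : ∃ w ∈ Z, z = q • w
        · obtain ⟨w, hw, rfl⟩ := hg
          have h1 : 0 < w i0 := hpos w hw i0
          have hqw : (q • w) i0 = q * w i0 := rfl
          rw [hqw] at hle
          have h2 : w i0 < q * w i0 := by nlinarith
          obtain ⟨x, hx, n, rfl⟩ := ih w hw (by omega)
          exact ⟨x, hx, n + 1, by rw [← mul_smul, ← pow_succ']⟩
        · exact ⟨z, ⟨hz, hg⟩, 0, by simp⟩
    refine ⟨hGfin.toFinset, ?_⟩
    ext z
    simp only [Set.mem_setOf_eq, Set.Finite.mem_toFinset]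
    constructor
    · intro hz; exact descend (z i0) z hz le_rfl
    · rintro ⟨x, hx, n, rfl⟩
      exact hclos n x hx.1
end

section
/- Let K be a field, s an element of a separable closure of K, separable over K, and let e be the smallest positive integer such that K(s^e) ⊆ K(s^n) for all n ∈ ℕ (i.e., K(s^e) = ∩_{n∈ℕ} K(s^n)). If K has characteristic p > 0, then gcd(e, p) = 1. -/
open scoped IntermediateField


/-- If `e` is the smallest positive integer with `K(s^e) ⊆ K(s^n)` for all
`n ≥ 1`, and `char K = p > 0` with `s` separable over `K`, then `gcd(e,p) = 1`. -/
theorem stmt_10 (p : ℕ) (hp : p.Prime) (K L : Type*) [Field K] [Field L]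
    [CharP K p] [Algebra K L] (s : L)
    (hint : IsIntegral K s) (hsep : (minpoly K s).Separable)
    (e : ℕ) (he : 0 < e)
    (hmin : ∀ n : ℕ, 0 < n →
      IntermediateField.adjoin K {s ^ e} ≤ IntermediateField.adjoin K {s ^ n})
    (hleast : ∀ e' : ℕ, 0 < e' →
      (∀ n : ℕ, 0 < n →
        IntermediateField.adjoin K {s ^ e'} ≤ IntermediateField.adjoin K {s ^ n}) →
      e ≤ e') :
    Nat.Coprime e p := by
  by_contra h
  have hpe : p ∣ e := by
    rw [Nat.coprime_comm, hp.coprime_iff_not_dvd, not_not] at h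
    exact h
  obtain ⟨α, hα⟩ := hpe
  have hα0 : 0 < α := by
    rcases Nat.eq_zero_or_pos α with h0 | h0
    · subst h0; simp at hα; omega
    · exact h0
  have hp2 := hp.two_le
  -- char p on L
  haveI : CharP L p := charP_of_injective_algebraMap (algebraMap K L).injective p
  set F := IntermediateField.adjoin K {s ^ e} with hF
  haveI : ExpChar F p := ExpChar.prime hp
  -- (s^α)^p = s^e ∈ F
  have hpow : (s ^ α) ^ p ∈ F := by
    rw [← pow_mul, mul_comm α p, ← hα]
    exact IntermediateField.mem_adjoin_simple_self K (s ^ e)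
  -- s^α is separable over K
  have hsepα : IsSeparable K (s ^ α) := by
    haveI : Algebra.IsSeparable K K⟮s⟯ :=
      (IntermediateField.isSeparable_adjoin_simple_iff_isSeparable K L).2 hsep
    exact IntermediateField.isSeparable_of_mem_isSeparable K L
      (pow_mem (IntermediateField.mem_adjoin_simple_self K s) α)
  -- s^α is separable over F
  have hsepF : IsSeparable F (s ^ α) := IsSeparable.tower_top F hsepα
  -- s^α ∈ F
  have hmem : s ^ α ∈ F := by
    haveI : IsPurelyInseparable F F⟮s ^ α⟯ := by
      rw [IntermediateField.isPurelyInseparable_adjoin_simple_iff_pow_mem F L p]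
      exact ⟨1, by rw [pow_one]; exact ⟨⟨_, hpow⟩, rfl⟩⟩
    haveI : Algebra.IsSeparable F F⟮s ^ α⟯ :=
      (IntermediateField.isSeparable_adjoin_simple_iff_isSeparable F L).2 hsepF
    have hbot : F⟮s ^ α⟯ = ⊥ :=
      IntermediateField.eq_bot_of_isPurelyInseparable_of_isSeparable _
    have : s ^ α ∈ F⟮s ^ α⟯ := IntermediateField.mem_adjoin_simple_self F (s ^ α)
    rw [hbot, IntermediateField.mem_bot] at this
    obtain ⟨y, hy⟩ := this
    rw [← hy]
    exact y.2
  -- K(s^α) ≤ K(s^n) for all n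
  have hle : ∀ n : ℕ, 0 < n →
      IntermediateField.adjoin K {s ^ α} ≤ IntermediateField.adjoin K {s ^ n} := by
    intro n hn
    refine le_trans ?_ (hmin n hn)
    rw [IntermediateField.adjoin_simple_le_iff]
    exact hmem
  have := hleast α hα0 hle
  nlinarith
end

section
/- Let 𝒪 = 𝔽_2[x], K = 𝔽_2(x), and let s be a root of the polynomial P(Y) = Y^4 + x^4·Y^2 + x^3·Y + η where η ∈ 𝒪 is such that P is irreducible over K and x does not divide η. Define η_1 = η and η_{m+1} = η^{4^m} + x^{3·4^m}·η_m + x^{4^{m+1}}·η_m^2, and set z_m = (s^{4^m} + η_m)/x^{4^m − 1}. Then z_{m+1} ∈ 𝒪[z_m] for every m ∈ ℕ; in fact z_{m+1} = x·(s^{4^m} + η_m)^2 + (s^{4^m} + η_m)/x^{4^m−1}. -/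
open Polynomial

/-- In the example of Subsection 3.3: with `𝒪 = 𝔽₂[x]`, `s` a root of
`P(Y) = Y⁴ + x⁴Y² + x³Y + η`, and `z_m = (s^{4^m} + η_m)/x^{4^m-1}`, one has
`z_{m+1} ∈ 𝒪[z_m]`, and in fact
`z_{m+1} = x (s^{4^m} + η_m)² + (s^{4^m} + η_m)/x^{4^m-1}`. -/
theorem stmt_11 (L : Type*) [Field L] [Algebra (RatFunc (ZMod 2)) L]
    [Algebra (ZMod 2) L] [IsScalarTower (ZMod 2) (RatFunc (ZMod 2)) L]
    (η : Polynomial (ZMod 2)) (hηx : ¬ (Polynomial.X ∣ η))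
    (xK : RatFunc (ZMod 2))
    (hxK : xK = algebraMap (Polynomial (ZMod 2)) (RatFunc (ZMod 2)) Polynomial.X)
    (P : Polynomial (RatFunc (ZMod 2)))
    (hP : P = Polynomial.X ^ 4 + Polynomial.C (xK ^ 4) * Polynomial.X ^ 2
      + Polynomial.C (xK ^ 3) * Polynomial.X
      + Polynomial.C (algebraMap (Polynomial (ZMod 2)) (RatFunc (ZMod 2)) η))
    (hPirr : Irreducible P)
    (s : L) (hs : Polynomial.aeval s P = 0)
    (ηs : ℕ → Polynomial (ZMod 2)) (hη1 : ηs 1 = η)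
    (hηrec : ∀ m : ℕ, 1 ≤ m → ηs (m + 1) =
      η ^ (4 ^ m) + Polynomial.X ^ (3 * 4 ^ m) * ηs m
        + Polynomial.X ^ (4 ^ (m + 1)) * (ηs m) ^ 2)
    (xL : L) (hxL : xL = algebraMap (RatFunc (ZMod 2)) L xK)
    (ηL : ℕ → L)
    (hηL : ∀ m, ηL m = algebraMap (RatFunc (ZMod 2)) L
      (algebraMap (Polynomial (ZMod 2)) (RatFunc (ZMod 2)) (ηs m)))
    (z : ℕ → L)
    (hz : ∀ m : ℕ, 1 ≤ m → z m = (s ^ 4 ^ m + ηL m) / xL ^ (4 ^ m - 1)) :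
    ∀ m : ℕ, 1 ≤ m →
      z (m + 1) ∈ Algebra.adjoin (ZMod 2) {xL, z m} ∧
      z (m + 1) = xL * (s ^ 4 ^ m + ηL m) ^ 2
        + (s ^ 4 ^ m + ηL m) / xL ^ (4 ^ m - 1) := by
  haveI : CharP L 2 := charP_of_injective_algebraMap (algebraMap (ZMod 2) L).injective 2
  have h2 : (2 : L) = 0 := CharP.cast_eq_zero L 2
  have hx0 : xL ≠ 0 := by
    rw [hxL, hxK]
    exact (_root_.map_ne_zero _).mpr (RatFunc.algebraMap_ne_zero Polynomial.X_ne_zero)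
  set f : Polynomial (ZMod 2) →+* L := (algebraMap (RatFunc (ZMod 2)) L).comp
      (algebraMap (Polynomial (ZMod 2)) (RatFunc (ZMod 2))) with hf
  have hfX : f Polynomial.X = xL := by rw [hf, RingHom.comp_apply, ← hxK, ← hxL]
  have hηLf : ∀ m, ηL m = f (ηs m) := fun m => by rw [hηL m, hf, RingHom.comp_apply]
  -- basic relation from P(s) = 0
  have hseq : s ^ 4 = xL ^ 4 * s ^ 2 + xL ^ 3 * s + f η := by
    rw [hP] at hs
    simp only [map_add, map_mul, aeval_X_pow, aeval_C, aeval_X, map_pow] at hs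
    rw [hxL]
    have : (algebraMap (RatFunc (ZMod 2)) L) xK ^ 4 * s ^ 2
        + (algebraMap (RatFunc (ZMod 2)) L) xK ^ 3 * s + f η
        = (algebraMap (RatFunc (ZMod 2)) L) xK ^ 4 * s ^ 2
        + (algebraMap (RatFunc (ZMod 2)) L) xK ^ 3 * s
        + (algebraMap (RatFunc (ZMod 2)) L)
            ((algebraMap (Polynomial (ZMod 2)) (RatFunc (ZMod 2))) η) := rfl
    rw [this]
    linear_combination hs - ((algebraMap (RatFunc (ZMod 2)) L) xK ^ 4 * s ^ 2
      + (algebraMap (RatFunc (ZMod 2)) L) xK ^ 3 * s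
      + (algebraMap (RatFunc (ZMod 2)) L)
          ((algebraMap (Polynomial (ZMod 2)) (RatFunc (ZMod 2))) η)) * h2
  intro m hm
  -- Frobenius: raise hseq to the 4^m-th power
  have hfrob2 : ∀ a b : L, (a + b) ^ 2 = a ^ 2 + b ^ 2 := fun a b => CharTwo.add_sq a b
  have hfrob : ∀ a b c : L, (a + b + c) ^ 4 ^ m = a ^ 4 ^ m + b ^ 4 ^ m + c ^ 4 ^ m := by
    intro a b c
    have h4 : (4 : ℕ) ^ m = 2 ^ (2 * m) := by
      rw [pow_mul]; norm_num
    rw [h4, add_pow_char_pow, add_pow_char_pow]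
  have key : s ^ 4 ^ (m + 1) = xL ^ 4 ^ (m + 1) * (s ^ 4 ^ m) ^ 2
      + xL ^ (3 * 4 ^ m) * s ^ 4 ^ m + (f η) ^ 4 ^ m := by
    calc s ^ 4 ^ (m + 1) = (s ^ 4) ^ 4 ^ m := by
          rw [← pow_mul, pow_succ, mul_comm (4 ^ m) 4, pow_mul]
      _ = (xL ^ 4) ^ 4 ^ m * (s ^ 2) ^ 4 ^ m + (xL ^ 3) ^ 4 ^ m * s ^ 4 ^ m
          + (f η) ^ 4 ^ m := by rw [hseq, hfrob, mul_pow, mul_pow]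
      _ = _ := by
          rw [← pow_mul, ← pow_mul, ← pow_mul, ← pow_mul,
            show 4 * 4 ^ m = 4 ^ (m + 1) from by rw [pow_succ]; ring,
            show 2 * 4 ^ m = 4 ^ m * 2 from mul_comm _ _]
  -- η_{m+1} in L
  have hηnext : ηL (m + 1) = (f η) ^ 4 ^ m + xL ^ (3 * 4 ^ m) * ηL m
      + xL ^ 4 ^ (m + 1) * (ηL m) ^ 2 := by
    rw [hηLf, hηrec m hm]
    simp only [map_add, map_mul, map_pow, hfX, hηLf]
  set w : L := s ^ 4 ^ m + ηL m with hw
  have keyw : s ^ 4 ^ (m + 1) + ηL (m + 1)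
      = xL ^ 4 ^ (m + 1) * w ^ 2 + xL ^ (3 * 4 ^ m) * w := by
    rw [key, hηnext, hw, hfrob2]
    ring_nf
    linear_combination (f η) ^ 4 ^ m * h2
  -- exponent bookkeeping
  obtain ⟨e, he⟩ : ∃ e, 4 ^ m = e + 1 := ⟨4 ^ m - 1, (Nat.succ_pred_eq_of_pos (by positivity)).symm⟩
  have he1 : 4 ^ m - 1 = e := by omega
  have he2 : 4 ^ (m + 1) = 4 * (e + 1) := by rw [pow_succ, he]; ring
  have he3 : 4 ^ (m + 1) - 1 = 4 * e + 3 := by omega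
  -- the explicit formula
  have hzm1 : z (m + 1) = xL * w ^ 2 + w / xL ^ e := by
    rw [hz (m + 1) (by omega), keyw, he3, he2, he]
    field_simp
    ring
  have hform : z (m + 1) = xL * w ^ 2 + w / xL ^ (4 ^ m - 1) := by rw [hzm1, he1]
  refine ⟨?_, hform⟩
  -- membership: w = xL^e * z m, so z (m+1) = xL^(2e+1) * (z m)^2 + z m
  have hwz : w = xL ^ e * z m := by
    rw [hz m hm, he1, ← hw]
    field_simp
  have : z (m + 1) = xL ^ (2 * e + 1) * (z m) ^ 2 + z m := by
    rw [hzm1, hwz]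
    field_simp
    ring
  rw [this]
  have hxmem : xL ∈ Algebra.adjoin (ZMod 2) {xL, z m} :=
    Algebra.subset_adjoin (by simp)
  have hzmem : z m ∈ Algebra.adjoin (ZMod 2) {xL, z m} :=
    Algebra.subset_adjoin (by simp)
  exact add_mem (mul_mem (pow_mem hxmem _) (pow_mem hzmem _)) hzmem
end

section
/- With 𝒪 = 𝔽_2[x], η ∈ 𝒪 not divisible by x, η_1 = η and η_{m+1} = η^{4^m} + x^{3·4^m}·η_m + x^{4^{m+1}}·η_m^2, let v be the x-adic valuation on 𝔽_2[x] (so v(x) = 1). Then v(η_{m+1} − η_m^4) = 4^{m+1} − 4 for every m ∈ ℕ. -/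
open Polynomial

/-- With `η_1 = η` (not divisible by `x`) and
`η_{m+1} = η^{4^m} + x^{3·4^m} η_m + x^{4^{m+1}} η_m²` in `𝔽₂[x]`, the `x`-adic
valuation of `η_{m+1} - η_m⁴` equals `4^{m+1} - 4` for every `m ≥ 1`. -/
theorem stmt_12 (η : Polynomial (ZMod 2)) (hηx : ¬ (Polynomial.X ∣ η))
    (ηs : ℕ → Polynomial (ZMod 2)) (hη1 : ηs 1 = η)
    (hηrec : ∀ m : ℕ, 1 ≤ m → ηs (m + 1) =
      η ^ (4 ^ m) + Polynomial.X ^ (3 * 4 ^ m) * ηs m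
        + Polynomial.X ^ (4 ^ (m + 1)) * (ηs m) ^ 2) :
    ∀ m : ℕ, 1 ≤ m →
      (Polynomial.X ^ (4 ^ (m + 1) - 4) ∣ (ηs (m + 1) - (ηs m) ^ 4)) ∧
      ¬ (Polynomial.X ^ (4 ^ (m + 1) - 4 + 1) ∣ (ηs (m + 1) - (ηs m) ^ 4)) := by
  have frob2 : ∀ a b : Polynomial (ZMod 2), (a - b) ^ 2 = a ^ 2 - b ^ 2 := by
    intro a b; exact sub_pow_char a b
  have frob4 : ∀ a b : Polynomial (ZMod 2), (a - b) ^ 4 = a ^ 4 - b ^ 4 := by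
    intro a b
    have : (4 : ℕ) = 2 ^ 2 := by norm_num
    rw [this]; exact sub_pow_char_pow a b 2
  have key : ∀ m : ℕ, 1 ≤ m → ∃ q : Polynomial (ZMod 2),
      ηs (m + 1) - (ηs m) ^ 4 = Polynomial.X ^ (4 ^ (m + 1) - 4) * q ∧
        ¬ (Polynomial.X ∣ q) := by
    intro m hm
    induction m, hm using Nat.le_induction with
    | base =>
        refine ⟨η + Polynomial.X ^ 4 * η ^ 2, ?_, ?_⟩
        · rw [hηrec 1 le_rfl, hη1]
          norm_num
          ring
        · intro h
          apply hηx
          have h2 : Polynomial.X ∣ Polynomial.X ^ 4 * η ^ 2 :=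
            dvd_mul_of_dvd_left (dvd_pow_self _ (by norm_num)) _
          have : η = (η + Polynomial.X ^ 4 * η ^ 2) - Polynomial.X ^ 4 * η ^ 2 := by ring
          rw [this]; exact dvd_sub h h2
    | succ m hm ih =>
        obtain ⟨q, hq, hqx⟩ := ih
        have h4 : 4 ≤ 4 ^ (m + 1) := by
          calc (4:ℕ) = 4 ^ 1 := by norm_num
          _ ≤ 4 ^ (m + 1) := Nat.pow_le_pow_right (by norm_num) (by omega)
        set k := 4 ^ (m + 1) - 4 with hk
        -- Frobenius expansion of (ηs (m+1))^4
        have hpow : (ηs (m + 1)) ^ 4 =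
            η ^ (4 ^ (m + 1)) + Polynomial.X ^ (3 * 4 ^ (m + 1)) * (ηs m) ^ 4
              + Polynomial.X ^ (4 ^ (m + 2)) * ((ηs m) ^ 2) ^ 4 := by
          rw [hηrec m hm]
          have h4' : (4 : ℕ) = 2 ^ 2 := by norm_num
          have p1 : (η ^ 4 ^ m) ^ 4 = η ^ 4 ^ (m + 1) := by
            rw [← pow_mul, ← pow_succ]
          have e2 : 3 * 4 ^ m * 4 = 3 * 4 ^ (m + 1) := by rw [pow_succ]; ring
          have p2 : ((Polynomial.X : Polynomial (ZMod 2)) ^ (3 * 4 ^ m)) ^ 4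
              = Polynomial.X ^ (3 * 4 ^ (m + 1)) := by rw [← pow_mul, e2]
          have p3 : ((Polynomial.X : Polynomial (ZMod 2)) ^ (4 ^ (m + 1))) ^ 4
              = Polynomial.X ^ (4 ^ (m + 2)) := by rw [← pow_mul, ← pow_succ]
          rw [h4', add_pow_char_pow, add_pow_char_pow, ← h4', mul_pow, mul_pow, p1, p2, p3]
        have hd : ηs (m + 2) - (ηs (m + 1)) ^ 4 =
            Polynomial.X ^ (3 * 4 ^ (m + 1)) * (ηs (m + 1) - (ηs m) ^ 4)
              + Polynomial.X ^ (4 ^ (m + 2)) * (ηs (m + 1) - (ηs m) ^ 4) ^ 2 := by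
          rw [hηrec (m + 1) (by omega), hpow, frob2]
          ring_nf
        refine ⟨q + Polynomial.X ^ (2 * 4 ^ (m + 1) - 4) * q ^ 2, ?_, ?_⟩
        · rw [hd, hq]
          have e1 : 3 * 4 ^ (m + 1) + k = 4 ^ (m + 2) - 4 := by
            rw [hk, pow_succ (4:ℕ) (m+1)]; omega
          have e2 : 4 ^ (m + 2) + 2 * k = (4 ^ (m + 2) - 4) + (2 * 4 ^ (m + 1) - 4) := by
            rw [hk, pow_succ (4:ℕ) (m+1)]; omega
          calc Polynomial.X ^ (3 * 4 ^ (m + 1)) * (Polynomial.X ^ k * q)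
                + Polynomial.X ^ (4 ^ (m + 2)) * (Polynomial.X ^ k * q) ^ 2
              = Polynomial.X ^ (3 * 4 ^ (m + 1) + k) * q
                + Polynomial.X ^ (4 ^ (m + 2) + 2 * k) * q ^ 2 := by
                rw [pow_add, pow_add]; ring
            _ = Polynomial.X ^ (4 ^ (m + 2) - 4) * q
                + Polynomial.X ^ ((4 ^ (m + 2) - 4) + (2 * 4 ^ (m + 1) - 4)) * q ^ 2 := by
                rw [e1, e2]
            _ = Polynomial.X ^ (4 ^ (m + 2) - 4)
                * (q + Polynomial.X ^ (2 * 4 ^ (m + 1) - 4) * q ^ 2) := by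
                rw [pow_add]; ring
        · intro h
          apply hqx
          have h2 : Polynomial.X ∣ Polynomial.X ^ (2 * 4 ^ (m + 1) - 4) * q ^ 2 :=
            dvd_mul_of_dvd_left (dvd_pow_self _ (by omega)) _
          have : q = (q + Polynomial.X ^ (2 * 4 ^ (m + 1) - 4) * q ^ 2)
              - Polynomial.X ^ (2 * 4 ^ (m + 1) - 4) * q ^ 2 := by ring
          rw [this]; exact dvd_sub h h2
  intro m hm
  obtain ⟨q, hq, hqx⟩ := key m hm
  refine ⟨⟨q, hq⟩, ?_⟩
  intro h
  apply hqx
  rw [hq, pow_succ] at h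
  have hX : (Polynomial.X : Polynomial (ZMod 2)) ^ (4 ^ (m + 1) - 4) ≠ 0 :=
    pow_ne_zero _ Polynomial.X_ne_zero
  rcases h with ⟨r, hr⟩
  rw [mul_assoc] at hr
  exact ⟨r, mul_left_cancel₀ hX hr⟩
end

section
/- Let L = 𝔽_7(x,y) (rational function field in two variables over 𝔽_7), 𝒪 = 𝔽_7[x+y, xy], s = x, and t = 3x + 2y. Then for every i, j ∈ ℕ, setting m = n = 7^i + 7^j, we have s^m ∈ 𝒪[t^n] and t^n ∈ 𝒪[s^m]; i.e., 𝒪[s^m] = 𝒪[t^n]. -/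
open MvPolynomial

private lemma zmod7_pow_pow (c : ZMod 7) (i : ℕ) : c ^ 7 ^ i = c := by
  haveI : Fact (Nat.Prime 7) := ⟨by norm_num⟩
  induction i with
  | zero => simp
  | succ n ih => rw [pow_succ, pow_mul, ih, ZMod.pow_card]

private lemma frob713 (i : ℕ) :
    (3 * X 0 + 2 * X 1 : MvPolynomial (Fin 2) (ZMod 7)) ^ 7 ^ i =
      3 * X 0 ^ 7 ^ i + 2 * X 1 ^ 7 ^ i := by
  haveI : Fact (Nat.Prime 7) := ⟨by norm_num⟩
  have h3 : (3 : MvPolynomial (Fin 2) (ZMod 7)) = C 3 := by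
    simp [map_ofNat]
  have h2 : (2 : MvPolynomial (Fin 2) (ZMod 7)) = C 2 := by
    simp [map_ofNat]
  rw [add_pow_char_pow, mul_pow, mul_pow, h3, h2, ← map_pow, ← map_pow,
    zmod7_pow_pow, zmod7_pow_pow]

private lemma pow_add_pow_mem13 (A : Subalgebra (ZMod 7) (MvPolynomial (Fin 2) (ZMod 7)))
    (h1 : X 0 + X 1 ∈ A) (h2 : X 0 * X 1 ∈ A) :
    ∀ k, (X 0 : MvPolynomial (Fin 2) (ZMod 7)) ^ k + X 1 ^ k ∈ A := by
  intro k
  induction k using Nat.strong_induction_on with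
  | _ k ih =>
    match k with
    | 0 => simpa using A.add_mem A.one_mem A.one_mem
    | 1 => simpa using h1
    | (k + 2) =>
      have e : (X 0 : MvPolynomial (Fin 2) (ZMod 7)) ^ (k + 2) + X 1 ^ (k + 2) =
          (X 0 + X 1) * (X 0 ^ (k + 1) + X 1 ^ (k + 1))
            - (X 0 * X 1) * (X 0 ^ k + X 1 ^ k) := by ring
      rw [e]
      exact A.sub_mem (A.mul_mem h1 (ih (k + 1) (by omega)))
        (A.mul_mem h2 (ih k (by omega)))

private lemma mixed_mem13 (A : Subalgebra (ZMod 7) (MvPolynomial (Fin 2) (ZMod 7)))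
    (h1 : X 0 + X 1 ∈ A) (h2 : X 0 * X 1 ∈ A) (a b : ℕ) :
    (X 0 : MvPolynomial (Fin 2) (ZMod 7)) ^ a * X 1 ^ b + X 0 ^ b * X 1 ^ a ∈ A := by
  wlog hab : a ≤ b with H
  · rw [add_comm]
    exact H A h1 h2 b a (le_of_not_ge hab)
  obtain ⟨c, rfl⟩ := Nat.exists_eq_add_of_le hab
  have e : (X 0 : MvPolynomial (Fin 2) (ZMod 7)) ^ a * X 1 ^ (a + c)
      + X 0 ^ (a + c) * X 1 ^ a = (X 0 * X 1) ^ a * (X 0 ^ c + X 1 ^ c) := by ring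
  rw [e]
  exact A.mul_mem (A.pow_mem h2 a) (pow_add_pow_mem13 A h1 h2 c)

private lemma key13 (i j : ℕ) :
    (3 * X 0 + 2 * X 1 : MvPolynomial (Fin 2) (ZMod 7)) ^ (7 ^ i + 7 ^ j) =
      5 * X 0 ^ (7 ^ i + 7 ^ j)
        + 4 * (X 0 ^ (7 ^ i + 7 ^ j) + X 1 ^ (7 ^ i + 7 ^ j))
        + 6 * (X 0 ^ 7 ^ i * X 1 ^ 7 ^ j + X 0 ^ 7 ^ j * X 1 ^ 7 ^ i) := by
  rw [pow_add, frob713, frob713]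
  rw [pow_add, pow_add]
  ring

private lemma num_mem13 (A : Subalgebra (ZMod 7) (MvPolynomial (Fin 2) (ZMod 7)))
    (n : ℕ) [n.AtLeastTwo] :
    (OfNat.ofNat n : MvPolynomial (Fin 2) (ZMod 7)) ∈ A := by
  exact A.natCast_mem (OfNat.ofNat n)

private lemma fifteen13 : (15 : MvPolynomial (Fin 2) (ZMod 7)) = 1 := by
  have h0 : ((15 : ℕ) : ZMod 7) = 1 := by decide
  have h : (15 : MvPolynomial (Fin 2) (ZMod 7)) = ((15 : ℕ) : MvPolynomial (Fin 2) (ZMod 7)) := by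
    norm_cast
  rw [h, ← map_natCast (C : ZMod 7 →+* MvPolynomial (Fin 2) (ZMod 7)), h0, map_one]

/-- Example 1.4: with `𝒪 = 𝔽₇[x+y, xy]`, `s = x`, `t = 3x + 2y`, for
`m = n = 7^i + 7^j` one has `s^m ∈ 𝒪[t^n]` and `t^n ∈ 𝒪[s^m]`. -/
theorem stmt_13 :
    ∀ i j : ℕ, 1 ≤ i → 1 ≤ j →
      (X 0 : MvPolynomial (Fin 2) (ZMod 7)) ^ (7 ^ i + 7 ^ j) ∈
        Algebra.adjoin (ZMod 7)
          {X 0 + X 1, X 0 * X 1, (3 * X 0 + 2 * X 1) ^ (7 ^ i + 7 ^ j)} ∧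
      (3 * X 0 + 2 * X 1 : MvPolynomial (Fin 2) (ZMod 7)) ^ (7 ^ i + 7 ^ j) ∈
        Algebra.adjoin (ZMod 7)
          {X 0 + X 1, X 0 * X 1, (X 0) ^ (7 ^ i + 7 ^ j)} := by
  intro i j _ _
  set m : ℕ := 7 ^ i + 7 ^ j with hm
  constructor
  · set A := Algebra.adjoin (ZMod 7)
      ({X 0 + X 1, X 0 * X 1, (3 * X 0 + 2 * X 1) ^ m} :
        Set (MvPolynomial (Fin 2) (ZMod 7))) with hA
    have h1 : X 0 + X 1 ∈ A := Algebra.subset_adjoin (Set.mem_insert _ _)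
    have h2 : X 0 * X 1 ∈ A :=
      Algebra.subset_adjoin (Set.mem_insert_of_mem _ (Set.mem_insert _ _))
    have ht : (3 * X 0 + 2 * X 1 : MvPolynomial (Fin 2) (ZMod 7)) ^ m ∈ A :=
      Algebra.subset_adjoin (Set.mem_insert_of_mem _ (Set.mem_insert_of_mem _ rfl))
    have hS : (X 0 : MvPolynomial (Fin 2) (ZMod 7)) ^ m + X 1 ^ m ∈ A :=
      pow_add_pow_mem13 A h1 h2 m
    have hM : (X 0 : MvPolynomial (Fin 2) (ZMod 7)) ^ 7 ^ i * X 1 ^ 7 ^ j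
        + X 0 ^ 7 ^ j * X 1 ^ 7 ^ i ∈ A := mixed_mem13 A h1 h2 _ _
    have h5 : (5 : MvPolynomial (Fin 2) (ZMod 7)) * X 0 ^ m =
        (3 * X 0 + 2 * X 1) ^ m
          - (4 * (X 0 ^ m + X 1 ^ m)
            + 6 * (X 0 ^ 7 ^ i * X 1 ^ 7 ^ j + X 0 ^ 7 ^ j * X 1 ^ 7 ^ i)) := by
      rw [hm, key13]; ring
    have h5mem : (5 : MvPolynomial (Fin 2) (ZMod 7)) * X 0 ^ m ∈ A := by
      rw [h5]
      exact A.sub_mem ht (A.add_mem (A.mul_mem (num_mem13 A 4) hS)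
        (A.mul_mem (num_mem13 A 6) hM))
    have hx : (X 0 : MvPolynomial (Fin 2) (ZMod 7)) ^ m =
        3 * (5 * X 0 ^ m) := by
      rw [← mul_assoc, show (3 : MvPolynomial (Fin 2) (ZMod 7)) * 5 = 15 by norm_num,
        fifteen13, one_mul]
    rw [hx]
    exact A.mul_mem (num_mem13 A 3) h5mem
  · set A := Algebra.adjoin (ZMod 7)
      ({X 0 + X 1, X 0 * X 1, (X 0) ^ m} :
        Set (MvPolynomial (Fin 2) (ZMod 7))) with hA
    have h1 : X 0 + X 1 ∈ A := Algebra.subset_adjoin (Set.mem_insert _ _)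
    have h2 : X 0 * X 1 ∈ A :=
      Algebra.subset_adjoin (Set.mem_insert_of_mem _ (Set.mem_insert _ _))
    have hx : (X 0 : MvPolynomial (Fin 2) (ZMod 7)) ^ m ∈ A :=
      Algebra.subset_adjoin (Set.mem_insert_of_mem _ (Set.mem_insert_of_mem _ rfl))
    have hS : (X 0 : MvPolynomial (Fin 2) (ZMod 7)) ^ m + X 1 ^ m ∈ A :=
      pow_add_pow_mem13 A h1 h2 m
    have hM : (X 0 : MvPolynomial (Fin 2) (ZMod 7)) ^ 7 ^ i * X 1 ^ 7 ^ j
        + X 0 ^ 7 ^ j * X 1 ^ 7 ^ i ∈ A := mixed_mem13 A h1 h2 _ _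
    rw [hm, key13]
    exact A.add_mem (A.add_mem (A.mul_mem (num_mem13 A 5) (by rw [← hm]; exact hx))
      (A.mul_mem (num_mem13 A 4) (by rw [← hm]; exact hS)))
      (A.mul_mem (num_mem13 A 6) hM)
end
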